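/- For a (p,q)-clan γ, the permutation v_γ equals the identity and the clan polynomial specialization 𝔰_γ(0) (all y_i = 0) equals 1 if and only if γ is the rainbow clan, consisting of min(p,q) nested arcs matching i with p+q+1−i for i ≤ min(p,q) together with |p−q| unmatched signs in the middle. -/

import Mathlib

open scoped Classical
namespace ClanPaper

/-- A `(p,q)`-clan: a partial matching on `n = p+q` linearly ordered nodes,
given by the involution `m` (whose fixed points are the unmatched nodes),
with unmatched nodes signed `+` (`true`) or `-` (`false`), such that
`#(+) - #(-) = p - q`.  Signs at matched nodes are normalized to `false`. -/
structure Clan (p q : ℕ) where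
  m : Fin (p + q) → Fin (p + q)
  invol : ∀ i, m (m i) = i
  sign : Fin (p + q) → Bool
  signMatched : ∀ i, m i ≠ i → sign i = false
  balance :
    (Finset.univ.filter fun i => m i = i ∧ sign i = true).card + q =
      (Finset.univ.filter fun i => m i = i ∧ sign i = false).card + p

namespace Clan

variable {p q : ℕ}

/-- `Σ_{(i,j)-matchings, i<j} (j - i)` for the partial matching given by an
involution `m`. -/
noncomputable def arcSumAux {n : ℕ} (m : Fin n → Fin n) : ℕ :=
  ∑ i ∈ Finset.univ.filter (fun i => i < m i), ((m i : ℕ) - (i : ℕ))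

/-- The number of crossings: pairs of matchings `(i,j)`, `(k,l)` with
`i < k < j < l`. -/
noncomputable def crossingsAux {n : ℕ} (m : Fin n → Fin n) : ℕ :=
  (Finset.univ.filter fun x : Fin n × Fin n =>
    x.1 < m x.1 ∧ x.2 < m x.2 ∧ x.1 < x.2 ∧ x.2 < m x.1 ∧ m x.1 < m x.2).card

/-- `ℓ := Σ_{(i,j)-matchings} (j-i) - #crossings`, at the level of raw data. -/
noncomputable def lenAux {n : ℕ} (m : Fin n → Fin n) : ℤ :=
  (arcSumAux m : ℤ) - (crossingsAux m : ℤ)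

/-- The length `ℓ(γ)` of a clan. -/
noncomputable def len (γ : Clan p q) : ℤ := lenAux γ.m

/-- Node `i` is an unmatched `-` or a left endpoint of a matching
(these get the labels `1,…,q` in the definition of `u_γ`). -/
def IsMinusOrLeft (γ : Clan p q) (i : Fin (p + q)) : Prop :=
  (γ.m i = i ∧ γ.sign i = false) ∨ i < γ.m i

/-- Node `i` is an unmatched `+` or a left endpoint of a matching
(these get the labels `1,…,p` in the definition of `v_γ`). -/
def IsPlusOrLeft (γ : Clan p q) (i : Fin (p + q)) : Prop :=
  (γ.m i = i ∧ γ.sign i = true) ∨ i < γ.m i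

/-- `u_γ` as a `ℕ`-valued labelling (with values in `1,…,n`): the `-`s and the
left endpoints get the labels `1,…,q` from left to right, the `+`s and the
right endpoints get the labels `q+1,…,n` from left to right. -/
noncomputable def uFun (γ : Clan p q) (i : Fin (p + q)) : ℕ :=
  if γ.IsMinusOrLeft i then
    1 + (Finset.univ.filter fun j => γ.IsMinusOrLeft j ∧ j < i).card
  else
    q + 1 + (Finset.univ.filter fun j => ¬ γ.IsMinusOrLeft j ∧ j < i).card

/-- `v_γ` as a `ℕ`-valued labelling (with values in `1,…,n`): the `+`s and the
left endpoints get the labels `1,…,p` from left to right, the `-`s and the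
right endpoints get the labels `p+1,…,n` from left to right. -/
noncomputable def vFun (γ : Clan p q) (i : Fin (p + q)) : ℕ :=
  if γ.IsPlusOrLeft i then
    1 + (Finset.univ.filter fun j => γ.IsPlusOrLeft j ∧ j < i).card
  else
    p + 1 + (Finset.univ.filter fun j => ¬ γ.IsPlusOrLeft j ∧ j < i).card

/-- The transposition of `i` and `i'`, as a function. -/
def swapFun {n : ℕ} (i i' : Fin n) : Fin n → Fin n :=
  fun x => if x = i then i' else if x = i' then i else x

/-- Nodes `i`, `i'` are both unmatched and carry opposite signs. -/
def Opp (γ : Clan p q) (i i' : Fin (p + q)) : Prop :=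
  γ.m i = i ∧ γ.m i' = i' ∧ γ.sign i ≠ γ.sign i'

/-- `HeckeSpec γ i i' γ'` (for `i' = i+1`) says `γ' = s_i * γ` for the `0`-Hecke
action: if nodes `i`, `i'` carry opposite signs, they are replaced by a matching
between them; otherwise the two nodes are swapped if this increases the length,
and nothing happens if not. -/
def HeckeSpec (γ : Clan p q) (i i' : Fin (p + q)) (γ' : Clan p q) : Prop :=
  (γ.Opp i i' ∧
    (∀ x, γ'.m x = if x = i then i' else if x = i' then i else γ.m x) ∧
    (∀ x, γ'.sign x = if x = i ∨ x = i' then false else γ.sign x)) ∨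
  (¬ γ.Opp i i' ∧
    lenAux γ.m < lenAux (swapFun i i' ∘ γ.m ∘ swapFun i i') ∧
    (∀ x, γ'.m x = swapFun i i' (γ.m (swapFun i i' x))) ∧
    (∀ x, γ'.sign x = γ.sign (swapFun i i' x))) ∨
  (¬ γ.Opp i i' ∧
    ¬ lenAux γ.m < lenAux (swapFun i i' ∘ γ.m ∘ swapFun i i') ∧ γ' = γ)

end Clan
end ClanPaper

namespace ClanPaper
namespace Clan

variable {p q : ℕ}

/-- Number of vertical boundary steps (left endpoints and `+`s) strictly before
node `s`. -/
noncomputable def vCount (γ : Clan p q) (s : Fin (p + q)) : ℕ :=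
  (Finset.univ.filter fun t => γ.IsPlusOrLeft t ∧ t < s).card

/-- `shape γ i` is the length of the `i`-th row (0-indexed) of the Young
diagram `λ(γ)` inside the `p × q` rectangle: reading the southeast boundary of
`λ(γ)` from the northeast corner to the southwest corner, left endpoints and
`+`s give vertical steps and right endpoints and `-`s give horizontal steps. -/
noncomputable def shape (γ : Clan p q) (i : ℕ) : ℕ :=
  (Finset.univ.filter fun s : Fin (p + q) => ¬ γ.IsPlusOrLeft s ∧ i < γ.vCount s).card

/-- The box in row `i`, column `j` (both 0-indexed, columns from the left)
belongs to the Young diagram `λ(γ)`. -/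
def InLambda (γ : Clan p q) (i : Fin p) (j : Fin q) : Prop := (j : ℕ) < γ.shape i

/-- Column (0-indexed, from the left) of the horizontal boundary step `s`. -/
noncomputable def colOf (γ : Clan p q) (s : Fin (p + q)) : ℕ :=
  q - 1 - (Finset.univ.filter fun t => ¬ γ.IsPlusOrLeft t ∧ t < s).card

/-- The six bumpless pipe dream tiles: empty, horizontal, vertical, crossing,
SE-elbow `╭` and NW-elbow `╯`. -/
inductive Tile | empty | horiz | vert | cross | se | nw
deriving DecidableEq

instance : Fintype Tile :=
  ⟨⟨([Tile.empty, Tile.horiz, Tile.vert, Tile.cross, Tile.se, Tile.nw] : List Tile),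
    Multiset.coe_nodup.mpr (by decide)⟩, fun x => by cases x <;> simp⟩

namespace Tile
/-- the tile carries a horizontal-direction strand (E or W half-edge) -/
def hasH : Tile → Bool | horiz => true | cross => true | se => true | nw => true | _ => false
/-- the tile carries a vertical-direction strand (N or S half-edge) -/
def hasV : Tile → Bool | vert => true | cross => true | se => true | nw => true | _ => false
/-- a pipe crosses the east edge of the tile -/
def eastSel : Tile → Bool | horiz => true | cross => true | se => true | _ => false
/-- a pipe crosses the west edge of the tile -/
def westSel : Tile → Bool | horiz => true | cross => true | nw => true | _ => false
/-- a pipe crosses the south edge of the tile -/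
def southSel : Tile → Bool | vert => true | cross => true | se => true | _ => false
/-- a pipe crosses the north edge of the tile -/
def northSel : Tile → Bool | vert => true | cross => true | nw => true | _ => false
end Tile

/-- Raw data of a BPD fragment on the `p × q` rectangle: a tile in each box,
together with an optional pipe label for the vertical strand and for the
horizontal strand of the box (labels identify pipes; the pipe of an arc is
labelled by the left endpoint of the arc). -/
abbrev FragData (p q : ℕ) :=
  (Fin p → Fin q → Tile) × (Fin p → Fin q → Option (Fin (p + q))) ×
    (Fin p → Fin q → Option (Fin (p + q)))

namespace FragData

/-- the tile in box `(i,j)` -/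
def T (d : FragData p q) : Fin p → Fin q → Tile := d.1
/-- the label of the vertical strand in box `(i,j)` -/
def V (d : FragData p q) : Fin p → Fin q → Option (Fin (p + q)) := d.2.1
/-- the label of the horizontal strand in box `(i,j)` -/
def H (d : FragData p q) : Fin p → Fin q → Option (Fin (p + q)) := d.2.2

/-- label of the pipe leaving box `(i,j)` through its east edge -/
def east (d : FragData p q) (i : Fin p) (j : Fin q) : Option (Fin (p + q)) :=
  if (d.T i j).eastSel then d.H i j else none
/-- label of the pipe leaving box `(i,j)` through its west edge -/
def west (d : FragData p q) (i : Fin p) (j : Fin q) : Option (Fin (p + q)) :=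
  if (d.T i j).westSel then d.H i j else none
/-- label of the pipe leaving box `(i,j)` through its south edge -/
def south (d : FragData p q) (i : Fin p) (j : Fin q) : Option (Fin (p + q)) :=
  if (d.T i j).southSel then d.V i j else none
/-- label of the pipe leaving box `(i,j)` through its north edge -/
def north (d : FragData p q) (i : Fin p) (j : Fin q) : Option (Fin (p + q)) :=
  if (d.T i j).northSel then d.V i j else none

end FragData

/-- `d` is a bumpless pipe dream fragment of the clan `γ`: a tiling of the
Young diagram `λ(γ)` by the six BPD tiles in which labelled pipes match up
across the edges of adjacent tiles, no pipe crosses the north or west boundary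
of `λ(γ)`, and on the southeast boundary of `λ(γ)` the pipe crossing the
boundary step of a node is precisely (the pipe labelled by) the arc of `γ`
through that node; so the pipes realize the matching of `γ`. -/
def IsFragment (γ : Clan p q) (d : FragData p q) : Prop :=
  (∀ i j, ¬ γ.InLambda i j → d.T i j = Tile.empty ∧ d.V i j = none ∧ d.H i j = none) ∧
  (∀ i j, (d.V i j ≠ none ↔ (d.T i j).hasV = true) ∧
    (d.H i j ≠ none ↔ (d.T i j).hasH = true)) ∧
  (∀ i j, d.T i j = Tile.se ∨ d.T i j = Tile.nw → d.V i j = d.H i j) ∧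
  (∀ (i : Fin p) (j j' : Fin q), (j' : ℕ) = (j : ℕ) + 1 → γ.InLambda i j' →
    d.east i j = d.west i j') ∧
  (∀ (i i' : Fin p) (j : Fin q), (i' : ℕ) = (i : ℕ) + 1 → γ.InLambda i' j →
    d.south i j = d.north i' j) ∧
  (∀ (i : Fin p) (j : Fin q), (j : ℕ) = 0 → d.west i j = none) ∧
  (∀ (i : Fin p) (j : Fin q), (i : ℕ) = 0 → d.north i j = none) ∧
  (∀ (i : Fin p) (j : Fin q) (t : Fin (p + q)), γ.InLambda i j →
    (j : ℕ) + 1 = γ.shape i → γ.IsPlusOrLeft t → γ.vCount t = (i : ℕ) →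
    d.east i j = if γ.m t = t then none else some t) ∧
  (∀ (i : Fin p) (j : Fin q) (s : Fin (p + q)), γ.InLambda i j →
    (∀ i' : Fin p, (i' : ℕ) = (i : ℕ) + 1 → ¬ γ.InLambda i' j) →
    ¬ γ.IsPlusOrLeft s → γ.colOf s = (j : ℕ) →
    d.south i j = if γ.m s = s then none else some (γ.m s))

/-- The type of bumpless pipe dream fragments of `γ`. -/
def Fragment (γ : Clan p q) := {d : FragData p q // IsFragment γ d}

noncomputable instance (γ : Clan p q) : Fintype γ.Fragment :=
  Subtype.fintype _

/-- The weight of a BPD fragment: the product of `y_i - y_{n-j+1}` over the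
empty tiles `(i,j)` (1-indexed; here all indices are 0-indexed). -/
noncomputable def wt (γ : Clan p q) (d : FragData p q) :
    MvPolynomial (Fin (p + q)) ℤ :=
  ∏ x ∈ Finset.univ.filter
      (fun x : Fin p × Fin q => γ.InLambda x.1 x.2 ∧ d.T x.1 x.2 = Tile.empty),
    (MvPolynomial.X (Fin.castLE (Nat.le_add_right p q) x.1) -
      MvPolynomial.X (⟨p + q - 1 - (x.2 : ℕ), by have := x.2.isLt; omega⟩ :
        Fin (p + q)))

/-- The clan polynomial `𝔰_γ(y) = Σ_{π ∈ BPD(γ)} wt(π)`. -/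
noncomputable def clanPoly (γ : Clan p q) : MvPolynomial (Fin (p + q)) ℤ :=
  ∑ π : γ.Fragment, γ.wt π.1

end Clan
end ClanPaper

namespace ClanPaper
namespace Clan

/-- `γ` is the rainbow `(p,q)`-clan: `min(p,q)` nested arcs matching `i` with
`p+q+1-i` for `i ≤ min(p,q)`, together with `|p-q|` unmatched signs in the
middle (`+` if `p > q`, `-` if `q > p`). -/
def IsRainbow {p q : ℕ} (γ : Clan p q) : Prop :=
  (∀ i : Fin (p + q), (i : ℕ) < min p q ∨ p + q - min p q ≤ (i : ℕ) →
    (γ.m i : ℕ) = p + q - 1 - (i : ℕ)) ∧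
  (∀ i : Fin (p + q), min p q ≤ (i : ℕ) → (i : ℕ) < p + q - min p q →
    γ.m i = i ∧ γ.sign i = decide (q < p))

end Clan
end ClanPaper

/-!
If `v_γ = id`, the left endpoints and `+`s of `γ` are exactly its first `p` nodes, so `λ(γ)` is
the whole `p × q` rectangle. A fragment of the rectangle without empty tiles is then forced,
antidiagonal by antidiagonal from the northwest corner, to be the diagonal tiling: elbows on the
diagonal, horizontal tiles above it, vertical tiles below it, the pipe entering row `i` from the
east turning south into column `i`. As `𝔰_γ(0)` counts the fragments without empty tiles,
`𝔰_γ(0) = 1` says exactly that this tiling is a fragment of `γ`, and its boundary conditions on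
the south and east edges say exactly that `γ` is the rainbow clan.
-/

open Finset

theorem Fin.exists_val_add_one_eq {n : ℕ} {i : Fin n} (hi : 0 < (i : ℕ)) :
    ∃ i' : Fin n, (i' : ℕ) + 1 = i :=
  ⟨⟨i - 1, by omega⟩, by simp only; omega⟩

theorem Fin.card_filter_le_val_lt {n a b : ℕ} (hb : b ≤ n) :
    #{i : Fin n | a ≤ (i : ℕ) ∧ (i : ℕ) < b} = b - a := by
  have hdiff : (univ.filter fun i : Fin n => a ≤ (i : ℕ) ∧ (i : ℕ) < b) =
      (univ.filter fun i : Fin n => (i : ℕ) < b) \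
        univ.filter fun i : Fin n => (i : ℕ) < min a b := by
    ext i; simp only [mem_sdiff, mem_filter, mem_univ, true_and]; omega
  rw [hdiff, card_sdiff_of_subset (fun i => by simp only [mem_filter, mem_univ, true_and]; omega),
    Fin.card_filter_val_lt, Fin.card_filter_val_lt]
  omega

namespace ClanPaper

theorem ite_ne_none_iff {α : Type*} {b : Bool} {x : Option α} (h : b = true → x ≠ none) :
    (if b = true then x else none) ≠ none ↔ b = true := by
  cases b <;> simp_all

theorem labelling_eq_succ_iff {n p : ℕ} (P : Fin n → Prop) (hP : #{i | P i} = p) :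
    (∀ i : Fin n, (if P i then 1 + #{j | P j ∧ j < i} else p + 1 + #{j | ¬ P j ∧ j < i}) =
      (i : ℕ) + 1) ↔ ∀ i : Fin n, P i ↔ (i : ℕ) < p := by
  constructor
  · intro hv
    have hge : ∀ i, ¬ P i → p ≤ (i : ℕ) := fun i hi => by
      have := hv i; rw [if_neg hi] at this; omega
    refine fun i => ⟨fun hi => ?_, fun hip => ?_⟩
    · have hbelow : #{j | P j ∧ j < i} = i := by have := hv i; rw [if_pos hi] at this; omega
      have hsub : insert i (univ.filter fun j => P j ∧ j < i) ⊆ univ.filter P := by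
        intro j hj
        rcases Finset.mem_insert.1 hj with rfl | hj
        · simpa using hi
        · exact mem_filter.2 ⟨mem_univ _, (mem_filter.1 hj).2.1⟩
      have := card_le_card hsub
      rw [card_insert_of_notMem (by simp), hbelow, hP] at this
      omega
    · by_contra hi
      have := hge i hi
      omega
  · intro hP' i
    by_cases hi : P i
    · have hip := (hP' i).1 hi
      have : (univ.filter fun j => P j ∧ j < i) = univ.filter fun j : Fin n => (j : ℕ) < i := by
        ext j; simp only [mem_filter, mem_univ, true_and, hP' j, Fin.lt_def]; omega
      rw [if_pos hi, this, Fin.card_filter_val_lt]; omega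
    · have hpi : p ≤ (i : ℕ) := by by_contra hc; exact hi ((hP' i).2 (by omega))
      have : (univ.filter fun j => ¬ P j ∧ j < i) =
          univ.filter fun j : Fin n => p ≤ (j : ℕ) ∧ (j : ℕ) < i := by
        ext j; simp only [mem_filter, mem_univ, true_and, hP' j, Fin.lt_def, not_lt]
      rw [if_neg hi, this, Fin.card_filter_le_val_lt i.isLt.le]; omega

namespace Clan

variable {p q : ℕ}

theorem card_lt_m_eq_card_m_lt (γ : Clan p q) : #{i | i < γ.m i} = #{i | γ.m i < i} :=
  card_nbij' γ.m γ.m (fun i hi => by simpa [γ.invol] using hi)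
    (fun i hi => by simpa [γ.invol] using hi) (fun i _ => γ.invol i) (fun i _ => γ.invol i)

theorem card_isPlusOrLeft (γ : Clan p q) : #{i | γ.IsPlusOrLeft i} = p := by
  have hsplit : #{i | γ.IsPlusOrLeft i} =
      #{i | γ.m i = i ∧ γ.sign i = true} + #{i | i < γ.m i} := by
    rw [← card_union_of_disjoint, ← filter_or]
    · exact congrArg card (filter_congr fun i _ => Iff.rfl)
    · exact disjoint_filter.2 fun i _ hi h => h.ne' hi.1
  have hcases : ∀ i : Fin (p + q), ((if γ.m i = i ∧ γ.sign i = true then 1 else 0) +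
      (if γ.m i = i ∧ γ.sign i = false then 1 else 0) + (if i < γ.m i then 1 else 0) +
      (if γ.m i < i then 1 else 0) : ℕ) = 1 := fun i => by
    rcases lt_trichotomy i (γ.m i) with h | h | h
    · simp [h, h.ne', not_lt_of_gt h]
    · cases γ.sign i <;> simp [← h]
    · simp [h, h.ne, not_lt_of_gt h]
  have htotal : #{i | γ.m i = i ∧ γ.sign i = true} + #{i | γ.m i = i ∧ γ.sign i = false} +
      #{i | i < γ.m i} + #{i | γ.m i < i} = p + q := by
    simp only [card_filter, ← sum_add_distrib, hcases, sum_const, card_univ, Fintype.card_fin,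
      smul_eq_mul, mul_one]
  have := γ.balance
  have := γ.card_lt_m_eq_card_m_lt
  omega

theorem eval_zero_wt (γ : Clan p q) (d : FragData p q) :
    MvPolynomial.eval (fun _ => (0 : ℤ)) (γ.wt d) =
      if ∀ i j, γ.InLambda i j → d.T i j ≠ .empty then 1 else 0 := by
  simp [wt, map_prod, zero_pow_eq, filter_eq_empty_iff]

theorem eval_zero_clanPoly (γ : Clan p q) :
    MvPolynomial.eval (fun _ => (0 : ℤ)) γ.clanPoly =
      #{π : γ.Fragment | ∀ i j, γ.InLambda i j → π.1.T i j ≠ .empty} := by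
  simp only [clanPoly, map_sum, eval_zero_wt, sum_boole]

/-- The southeast boundary of `λ(γ)` takes its `p` vertical steps first, i.e. `λ(γ)` is the
full `p × q` rectangle. -/
def FullShape (γ : Clan p q) : Prop := ∀ i : Fin (p + q), γ.IsPlusOrLeft i ↔ (i : ℕ) < p

theorem vFun_eq_succ_iff (γ : Clan p q) : (∀ i, γ.vFun i = (i : ℕ) + 1) ↔ γ.FullShape :=
  labelling_eq_succ_iff γ.IsPlusOrLeft γ.card_isPlusOrLeft

namespace FullShape

variable {γ : Clan p q}

theorem vCount_eq (h : γ.FullShape) (s : Fin (p + q)) : γ.vCount s = min p s := by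
  have : (univ.filter fun t => γ.IsPlusOrLeft t ∧ t < s) =
      univ.filter fun t : Fin (p + q) => (t : ℕ) < min p s := by
    ext t; simp only [mem_filter, mem_univ, true_and, h t, Fin.lt_def]; omega
  rw [vCount, this, Fin.card_filter_val_lt]
  omega

theorem shape_eq (h : γ.FullShape) {i : ℕ} (hi : i < p) : γ.shape i = q := by
  have : (univ.filter fun s : Fin (p + q) => ¬ γ.IsPlusOrLeft s ∧ i < γ.vCount s) =
      univ.filter fun s : Fin (p + q) => p ≤ (s : ℕ) ∧ (s : ℕ) < p + q := by
    ext s; simp only [mem_filter, mem_univ, true_and, h s, h.vCount_eq s]; omega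
  rw [shape, this, Fin.card_filter_le_val_lt le_rfl]
  omega

theorem inLambda (h : γ.FullShape) (i : Fin p) (j : Fin q) : γ.InLambda i j := by
  rw [InLambda, h.shape_eq i.isLt]
  exact j.isLt

theorem colOf_eq (h : γ.FullShape) {s : Fin (p + q)} (hs : p ≤ (s : ℕ)) :
    γ.colOf s = p + q - 1 - s := by
  have : (univ.filter fun t => ¬ γ.IsPlusOrLeft t ∧ t < s) =
      univ.filter fun t : Fin (p + q) => p ≤ (t : ℕ) ∧ (t : ℕ) < s := by
    ext t; simp only [mem_filter, mem_univ, true_and, h t, Fin.lt_def, not_lt]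
  rw [colOf, this, Fin.card_filter_le_val_lt s.isLt.le]
  omega

theorem lt_and_le_m_of_lt_m (h : γ.FullShape) {i : Fin (p + q)} (hi : i < γ.m i) :
    (i : ℕ) < p ∧ p ≤ (γ.m i : ℕ) := by
  refine ⟨(h i).1 (Or.inr hi), not_lt.1 fun hm => ?_⟩
  rcases (h (γ.m i)).2 hm with ⟨hfix, -⟩ | hlt
  · rw [γ.invol] at hfix
    exact hi.ne hfix
  · rw [γ.invol] at hlt
    exact lt_asymm hi hlt

theorem sign_eq (h : γ.FullShape) {i : Fin (p + q)} (hi : γ.m i = i) :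
    γ.sign i = decide ((i : ℕ) < p) := by
  have : γ.IsPlusOrLeft i ↔ γ.sign i = true := by simp [IsPlusOrLeft, hi]
  simp [← h i, this]

end FullShape

variable {γ : Clan p q}

theorem fullShape_of_isRainbow (hr : γ.IsRainbow) : γ.FullShape := by
  intro i
  have hi := i.isLt
  by_cases hlow : (i : ℕ) < min p q
  · have := hr.1 i (Or.inl hlow)
    exact iff_of_true (Or.inr (by rw [Fin.lt_def]; omega)) (by omega)
  by_cases hmid : (i : ℕ) < p + q - min p q
  · obtain ⟨hfix, hsign⟩ := hr.2 i (by omega) hmid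
    simp only [IsPlusOrLeft, hfix, hsign, lt_irrefl, or_false, true_and, decide_eq_true_eq]
    omega
  · have := hr.1 i (Or.inr (by omega))
    refine iff_of_false ?_ (by omega)
    rintro (⟨hfix, -⟩ | hlt)
    · rw [hfix] at this; omega
    · rw [Fin.lt_def] at hlt; omega

theorem FullShape.isRainbow_iff (h : γ.FullShape) :
    γ.IsRainbow ↔ ∀ s : Fin (p + q), p + q - min p q ≤ (s : ℕ) →
      (γ.m s : ℕ) = p + q - 1 - s := by
  refine ⟨fun hr s hs => hr.1 s (Or.inr hs), fun harc => ?_⟩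
  have houter : ∀ i : Fin (p + q), (i : ℕ) < min p q ∨ p + q - min p q ≤ (i : ℕ) →
      (γ.m i : ℕ) = p + q - 1 - i := by
    rintro i (hi | hi)
    · set s : Fin (p + q) := ⟨p + q - 1 - i, by omega⟩
      have hs : γ.m s = i := Fin.ext (by rw [harc s (by simp [s]; omega)]; simp [s]; omega)
      rw [← hs, γ.invol, hs]
    · exact harc i hi
  -- an arc starting at `a ≥ min p q` would end at an outer node `≥ p`,
  -- whose partner is `< min p q`
  have hlow_of_lt_m : ∀ a : Fin (p + q), a < γ.m a → (a : ℕ) < min p q := fun a ha => by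
    obtain ⟨ha, hb⟩ := h.lt_and_le_m_of_lt_m ha
    by_contra hmin
    have := houter (γ.m a) (Or.inr (by omega))
    rw [γ.invol] at this
    omega
  have hfix : ∀ i : Fin (p + q), min p q ≤ (i : ℕ) → (i : ℕ) < p + q - min p q →
      γ.m i = i := by
    intro i hlo hhi
    rcases lt_trichotomy i (γ.m i) with hlt | heq | hgt
    · have := hlow_of_lt_m i hlt
      omega
    · exact heq.symm
    · have hlow := hlow_of_lt_m (γ.m i) (by rwa [γ.invol])
      have := houter (γ.m i) (Or.inl hlow)
      rw [γ.invol] at this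
      omega
  refine ⟨houter, fun i hlo hhi => ⟨hfix i hlo hhi, ?_⟩⟩
  rw [h.sign_eq (hfix i hlo hhi)]
  exact decide_eq_decide.2 (by omega)

namespace Tile

theorem hasV_of_northSel {t : Tile} (h : t.northSel = true) : t.hasV = true := by
  cases t <;> simp_all [northSel, hasV]

theorem hasV_of_southSel {t : Tile} (h : t.southSel = true) : t.hasV = true := by
  cases t <;> simp_all [southSel, hasV]

theorem hasH_of_eastSel {t : Tile} (h : t.eastSel = true) : t.hasH = true := by
  cases t <;> simp_all [eastSel, hasH]

theorem hasH_of_westSel {t : Tile} (h : t.westSel = true) : t.hasH = true := by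
  cases t <;> simp_all [westSel, hasH]

end Tile

def diagTile (i j : ℕ) : Tile :=
  if i = j then .se else if i < j then .horiz else .vert

section diagTile

variable {i j : ℕ}

@[simp] theorem diagTile_ne_empty : diagTile i j ≠ .empty := by
  unfold diagTile; split_ifs <;> simp

@[simp] theorem northSel_diagTile : (diagTile i j).northSel = decide (j < i) := by
  unfold diagTile; split_ifs <;> simp [Tile.northSel] <;> omega

@[simp] theorem southSel_diagTile : (diagTile i j).southSel = decide (j ≤ i) := by
  unfold diagTile; split_ifs <;> simp [Tile.southSel] <;> omega

@[simp] theorem westSel_diagTile : (diagTile i j).westSel = decide (i < j) := by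
  unfold diagTile; split_ifs <;> simp [Tile.westSel] <;> omega

@[simp] theorem eastSel_diagTile : (diagTile i j).eastSel = decide (i ≤ j) := by
  unfold diagTile; split_ifs <;> simp [Tile.eastSel] <;> omega

@[simp] theorem hasV_diagTile : (diagTile i j).hasV = decide (j ≤ i) := by
  unfold diagTile; split_ifs <;> simp [Tile.hasV] <;> omega

@[simp] theorem hasH_diagTile : (diagTile i j).hasH = decide (i ≤ j) := by
  unfold diagTile; split_ifs <;> simp [Tile.hasH] <;> omega

theorem diagTile_eq_se_iff : diagTile i j = .se ↔ i = j := by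
  unfold diagTile; split_ifs <;> simp_all

theorem diagTile_ne_nw : diagTile i j ≠ .nw := by
  unfold diagTile; split_ifs <;> simp

theorem Tile.eq_diagTile {t : Tile} (ht : t ≠ .empty) (hn : t.northSel = true ↔ j < i)
    (hw : t.westSel = true ↔ i < j) : t = diagTile i j := by
  unfold diagTile
  cases t
  · exact absurd rfl ht
  all_goals
    simp [Tile.northSel, Tile.westSel] at hn hw
    split_ifs <;> first | rfl | omega

end diagTile

/-- The unique BPD of the rainbow clan: the pipe of node `i` enters row `i` from the east and
turns south into column `i`. -/
def diagData (p q : ℕ) : FragData p q :=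
  (fun i j => diagTile i j,
    fun i j => if (j : ℕ) ≤ i then some (Fin.castLE (Nat.le_add_left q p) j) else none,
    fun i j => if (i : ℕ) ≤ j then some (Fin.castLE (Nat.le_add_right p q) i) else none)

section diagData

variable (i : Fin p) (j : Fin q)

@[simp] theorem diagData_T : (diagData p q).T i j = diagTile i j := rfl

@[simp] theorem diagData_V : (diagData p q).V i j =
    if (j : ℕ) ≤ i then some (Fin.castLE (Nat.le_add_left q p) j) else none := rfl

@[simp] theorem diagData_H : (diagData p q).H i j =
    if (i : ℕ) ≤ j then some (Fin.castLE (Nat.le_add_right p q) i) else none := rfl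

theorem diagData_north : (diagData p q).north i j =
    if (j : ℕ) < i then some (Fin.castLE (Nat.le_add_left q p) j) else none := by
  simp only [FragData.north, diagData_T, diagData_V, northSel_diagTile, decide_eq_true_eq]
  split_ifs <;> first | rfl | omega

theorem diagData_south : (diagData p q).south i j =
    if (j : ℕ) ≤ i then some (Fin.castLE (Nat.le_add_left q p) j) else none := by
  simp only [FragData.south, diagData_T, diagData_V, southSel_diagTile, decide_eq_true_eq]
  split_ifs <;> rfl

theorem diagData_west : (diagData p q).west i j =
    if (i : ℕ) < j then some (Fin.castLE (Nat.le_add_right p q) i) else none := by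
  simp only [FragData.west, diagData_T, diagData_H, westSel_diagTile, decide_eq_true_eq]
  split_ifs <;> first | rfl | omega

theorem diagData_east : (diagData p q).east i j =
    if (i : ℕ) ≤ j then some (Fin.castLE (Nat.le_add_right p q) i) else none := by
  simp only [FragData.east, diagData_T, diagData_H, eastSel_diagTile, decide_eq_true_eq]
  split_ifs <;> rfl

end diagData

namespace IsFragment

variable {γ : Clan p q} {d : FragData p q}

theorem north_ne_none_iff (hd : IsFragment γ d) (i : Fin p) (j : Fin q) :
    d.north i j ≠ none ↔ (d.T i j).northSel = true :=
  ite_ne_none_iff fun hs => (hd.2.1 i j).1.2 (Tile.hasV_of_northSel hs)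

theorem south_ne_none_iff (hd : IsFragment γ d) (i : Fin p) (j : Fin q) :
    d.south i j ≠ none ↔ (d.T i j).southSel = true :=
  ite_ne_none_iff fun hs => (hd.2.1 i j).1.2 (Tile.hasV_of_southSel hs)

theorem west_ne_none_iff (hd : IsFragment γ d) (i : Fin p) (j : Fin q) :
    d.west i j ≠ none ↔ (d.T i j).westSel = true :=
  ite_ne_none_iff fun hs => (hd.2.1 i j).2.2 (Tile.hasH_of_westSel hs)

theorem east_ne_none_iff (hd : IsFragment γ d) (i : Fin p) (j : Fin q) :
    d.east i j ≠ none ↔ (d.T i j).eastSel = true :=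
  ite_ne_none_iff fun hs => (hd.2.1 i j).2.2 (Tile.hasH_of_eastSel hs)

/-- Pipes enter a box from the north (resp. west) exactly below (resp. right of) the diagonal,
by induction along antidiagonals; this pins down every tile. -/
theorem T_eq_diagTile (hd : IsFragment γ d) (hfull : ∀ i j, γ.InLambda i j)
    (hne : ∀ i j, d.T i j ≠ .empty) (i : Fin p) (j : Fin q) : d.T i j = diagTile i j := by
  obtain ⟨-, -, -, hew, hsn, hw0, hn0, -, -⟩ := id hd
  induction hN : (i : ℕ) + j using Nat.strong_induction_on generalizing i j with
  | _ N ih =>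
  have hnorth : d.north i j ≠ none ↔ (j : ℕ) < i := by
    rcases Nat.eq_zero_or_pos i with h0 | h0
    · simp [hn0 i j h0, h0]
    · obtain ⟨i', hi'⟩ := Fin.exists_val_add_one_eq (i := i) (by omega)
      rw [← hsn i' i j hi'.symm (hfull i j), hd.south_ne_none_iff, ih _ (by omega) i' j rfl,
        southSel_diagTile, decide_eq_true_iff]
      omega
  have hwest : d.west i j ≠ none ↔ (i : ℕ) < j := by
    rcases Nat.eq_zero_or_pos j with h0 | h0
    · simp [hw0 i j h0, h0]
    · obtain ⟨j', hj'⟩ := Fin.exists_val_add_one_eq (i := j) (by omega)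
      rw [← hew i j' j hj'.symm (hfull i j), hd.east_ne_none_iff, ih _ (by omega) i j' rfl,
        eastSel_diagTile, decide_eq_true_iff]
      omega
  exact Tile.eq_diagTile (hne i j) ((hd.north_ne_none_iff i j).symm.trans hnorth)
    ((hd.west_ne_none_iff i j).symm.trans hwest)

theorem H_eq (hd : IsFragment γ d) (h : γ.FullShape) (hT : ∀ i j, d.T i j = diagTile i j)
    (i : Fin p) (j : Fin q) :
    d.H i j = if (i : ℕ) ≤ j then some (Fin.castLE (Nat.le_add_right p q) i) else none := by
  obtain ⟨-, hstrand, -, hew, -, -, -, heast, -⟩ := id hd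
  split_ifs with hij
  swap
  · by_contra hne
    simpa [hT, hij] using (hstrand i j).2.1 hne
  induction hN : q - 1 - j using Nat.strong_induction_on generalizing j with
  | _ N ih =>
  have hE : d.east i j = d.H i j := by simp [FragData.east, hT, hij]
  by_cases hlast : (j : ℕ) + 1 = q
  · set t := Fin.castLE (Nat.le_add_right p q) i
    have hsome : d.east i j ≠ none := (hd.east_ne_none_iff i j).2 (by simp [hT, hij])
    rw [heast i j t (h.inLambda i j) (by rw [h.shape_eq i.isLt]; omega) ((h t).2 (by simp [t]))
      (by rw [h.vCount_eq]; simp [t])] at hE hsome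
    split_ifs at hE hsome
    · exact absurd rfl hsome
    · exact hE.symm
  · obtain ⟨j', hj'⟩ : ∃ j' : Fin q, (j : ℕ) + 1 = j' := ⟨⟨j + 1, by omega⟩, rfl⟩
    have hW : d.west i j' = d.H i j' := by simp [FragData.west, hT]; omega
    rw [← hE, hew i j j' hj'.symm (h.inLambda i j'), hW, ih _ (by omega) j' (by omega) rfl]

theorem V_eq (hd : IsFragment γ d) (hfull : ∀ i j, γ.InLambda i j)
    (hT : ∀ i j, d.T i j = diagTile i j)
    (hH : ∀ i j,
      d.H i j = if (i : ℕ) ≤ j then some (Fin.castLE (Nat.le_add_right p q) i) else none)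
    (i : Fin p) (j : Fin q) :
    d.V i j = if (j : ℕ) ≤ i then some (Fin.castLE (Nat.le_add_left q p) j) else none := by
  obtain ⟨-, hstrand, helbow, -, hsn, -, -, -, -⟩ := id hd
  split_ifs with hji
  swap
  · by_contra hne
    simpa [hT, hji] using (hstrand i j).1.1 hne
  induction hN : (i : ℕ) using Nat.strong_induction_on generalizing i with
  | _ N ih =>
  rcases hji.lt_or_eq with hlt | heq
  · obtain ⟨i', hi'⟩ := Fin.exists_val_add_one_eq (i := i) (by omega)
    have hNV : d.north i j = d.V i j := by simp [FragData.north, hT, hlt]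
    have hSV : d.south i' j = d.V i' j := by simp [FragData.south, hT]; omega
    rw [← hNV, ← hsn i' i j hi'.symm (hfull i j), hSV, ih _ (by omega) i' (by omega) rfl]
  · rw [helbow i j (Or.inl (by rw [hT, diagTile_eq_se_iff]; omega)), hH, if_pos heq.ge]
    congr 1
    ext
    simp [heq]

theorem eq_diagData (hd : IsFragment γ d) (h : γ.FullShape) (hne : ∀ i j, d.T i j ≠ .empty) :
    d = diagData p q := by
  have hT := hd.T_eq_diagTile h.inLambda hne
  have hH := hd.H_eq h hT
  exact Prod.ext (funext₂ hT) (Prod.ext (funext₂ (hd.V_eq h.inLambda hT hH)) (funext₂ hH))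

end IsFragment

theorem FullShape.isRainbow_of_isFragment_diagData (h : γ.FullShape)
    (hd : IsFragment γ (diagData p q)) : γ.IsRainbow := by
  obtain ⟨-, -, -, -, -, -, -, -, hsouth⟩ := hd
  refine h.isRainbow_iff.2 fun s hs => ?_
  have hsp : p ≤ (s : ℕ) := by omega
  have hbottom := hsouth ⟨p - 1, by omega⟩ ⟨p + q - 1 - s, by omega⟩ s (h.inLambda _ _)
    (fun i' hi' => by simp at hi'; omega) (by rw [h s]; omega) (by rw [h.colOf_eq hsp])
  rw [diagData_south, if_pos (by simp; omega)] at hbottom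
  split_ifs at hbottom
  simpa using (congrArg Fin.val (Option.some.inj hbottom)).symm

theorem IsRainbow.diagData_east_of_last {i : Fin p} {j : Fin q} {t : Fin (p + q)}
    (hr : γ.IsRainbow) (hj : (j : ℕ) + 1 = q) (hti : (t : ℕ) = i) :
    (diagData p q).east i j = if γ.m t = t then none else some t := by
  rw [diagData_east]
  by_cases hlow : (i : ℕ) < min p q
  · have hmt := hr.1 t (Or.inl (by omega))
    rw [if_pos (by omega), if_neg fun hfix => by rw [hfix] at hmt; omega]
    congr 1
    ext
    simp [hti]
  · rw [if_neg (by omega), if_pos (hr.2 t (by omega) (by omega)).1]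

theorem IsRainbow.diagData_south_of_last {i : Fin p} {j : Fin q} {s : Fin (p + q)}
    (hr : γ.IsRainbow) (hi : (i : ℕ) + 1 = p) (hsj : (s : ℕ) = p + q - 1 - j) :
    (diagData p q).south i j = if γ.m s = s then none else some (γ.m s) := by
  rw [diagData_south]
  by_cases hjp : (j : ℕ) < p
  · have hms := hr.1 s (Or.inr (by omega))
    rw [if_pos (by omega), if_neg fun hfix => by rw [hfix] at hms; omega]
    congr 1
    ext
    simp
    omega
  · rw [if_neg (by omega), if_pos (hr.2 s (by omega) (by omega)).1]

theorem FullShape.isFragment_diagData (h : γ.FullShape) (hr : γ.IsRainbow) :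
    IsFragment γ (diagData p q) := by
  refine ⟨fun i j hij => (hij (h.inLambda i j)).elim, fun i j => by simp, fun i j hse => ?_,
    fun i j j' hj' _ => ?_, fun i i' j hi' _ => ?_, fun i j hj => ?_, fun i j hi => ?_,
    fun i j t _ hj ht hti => ?_, fun i j s _ hlast hs hsj => ?_⟩
  · rw [diagData_T, diagTile_eq_se_iff] at hse
    rcases hse with hse | hnw
    · simp only [diagData_V, diagData_H, hse, le_refl, if_true, Option.some.injEq]
      ext
      simp [hse]
    · exact (diagTile_ne_nw hnw).elim
  · rw [diagData_east, diagData_west]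
    split_ifs <;> first | rfl | omega
  · rw [diagData_south, diagData_north]
    split_ifs <;> first | rfl | omega
  · rw [diagData_west, if_neg (by omega)]
  · rw [diagData_north, if_neg (by omega)]
  · rw [h.shape_eq i.isLt] at hj
    rw [h.vCount_eq] at hti
    exact hr.diagData_east_of_last hj (by have := (h t).1 ht; omega)
  · have hi : (i : ℕ) + 1 = p := by
      by_contra hne
      exact hlast ⟨i + 1, by omega⟩ rfl (h.inLambda _ _)
    have hsp : p ≤ (s : ℕ) := by
      by_contra hlt
      exact hs ((h s).2 (by omega))
    rw [h.colOf_eq hsp] at hsj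
    exact hr.diagData_south_of_last hi (by omega)

theorem FullShape.isFragment_diagData_iff (h : γ.FullShape) :
    IsFragment γ (diagData p q) ↔ γ.IsRainbow :=
  ⟨h.isRainbow_of_isFragment_diagData, h.isFragment_diagData⟩

theorem FullShape.eval_zero_clanPoly_eq_one_iff (h : γ.FullShape) :
    MvPolynomial.eval (fun _ => (0 : ℤ)) γ.clanPoly = 1 ↔ IsFragment γ (diagData p q) := by
  have hmem : ∀ π : γ.Fragment,
      (∀ i j, γ.InLambda i j → π.1.T i j ≠ .empty) ↔ π.1 = diagData p q := fun π =>
    ⟨fun hne => π.2.eq_diagData h fun i j => hne i j (h.inLambda i j),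
      fun hπ i j _ => by simp [hπ]⟩
  rw [eval_zero_clanPoly, Nat.cast_eq_one]
  constructor
  · intro hcard
    obtain ⟨π, hπ⟩ := card_pos.1 (hcard ▸ Nat.one_pos)
    exact (hmem π).1 (mem_filter.1 hπ).2 ▸ π.2
  · intro hd
    refine card_eq_one.2
      ⟨⟨diagData p q, hd⟩, eq_singleton_iff_unique_mem.2 ⟨?_, fun π hπ => ?_⟩⟩
    · exact mem_filter.2 ⟨mem_univ _, (hmem _).2 rfl⟩
    · exact Subtype.ext ((hmem π).1 (mem_filter.1 hπ).2)

end Clan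

end ClanPaper

open ClanPaper in
/-- For a `(p,q)`-clan `γ`: `v_γ = id` and `𝔰_γ(0) = 1`
(the clan polynomial specialized at `y = 0`) hold if and only if `γ` is the
rainbow clan. -/
theorem rainbow_characterization {p q : ℕ} (γ : Clan p q) :
    ((∀ i : Fin (p + q), γ.vFun i = (i : ℕ) + 1) ∧
      MvPolynomial.eval (fun _ => (0 : ℤ)) γ.clanPoly = 1) ↔ γ.IsRainbow := by
  rw [Clan.vFun_eq_succ_iff]
  constructor
  · rintro ⟨h, heval⟩
    exact h.isFragment_diagData_iff.1 (h.eval_zero_clanPoly_eq_one_iff.1 heval)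
  · intro hr
    have h := Clan.fullShape_of_isRainbow hr
    exact ⟨h, h.eval_zero_clanPoly_eq_one_iff.2 (h.isFragment_diagData_iff.2 hr)⟩
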